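/- Let γ ≠ 0, δ > 0 and M(0) > 0 with γ > -δ M(0). If M : [0,T) → ℝ is differentiable, positive, and satisfies M'(t) ≥ 2δ e^{2γt} M(t)² on [0,T), then T ≤ (1/(2γ)) log(1 + γ/(δ M(0))). -/

import Mathlib

/-!
With `W(t) = (δ/γ)(e^{2γt} - 1)`, whose derivative is `2δ e^{2γt}`, the differential inequality
says that `1/M + W` is nonincreasing. Since `1/M > 0`, this forces `W(t) < 1/M(0)` on `[0, T)`.
As `W` is strictly increasing and takes the value `1/M(0)` exactly at
`t = log(1 + γ/(δ M(0)))/(2γ)`, every `t < T` lies below that time.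
-/

open Real Set

noncomputable def expWeightIntegral (γ δ t : ℝ) : ℝ := δ / γ * (exp (2 * γ * t) - 1)

section ExpWeightIntegral

variable {γ δ : ℝ}

lemma hasDerivAt_expWeightIntegral (hγ : γ ≠ 0) (t : ℝ) :
    HasDerivAt (expWeightIntegral γ δ) (2 * δ * exp (2 * γ * t)) t := by
  refine ((((hasDerivAt_id t).const_mul (2 * γ)).exp.sub_const 1).const_mul (δ / γ)).congr_deriv
    ?_
  simp only [id, mul_one]
  field_simp

lemma expWeightIntegral_zero : expWeightIntegral γ δ 0 = 0 := by
  simp [expWeightIntegral]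

lemma expWeightIntegral_strictMono (hγ : γ ≠ 0) (hδ : 0 < δ) :
    StrictMono (expWeightIntegral γ δ) :=
  strictMono_of_deriv_pos fun t => by
    rw [(hasDerivAt_expWeightIntegral hγ t).deriv]
    positivity

lemma expWeightIntegral_log_one_add_div {m : ℝ} (hγ : γ ≠ 0) (hδ : δ ≠ 0)
    (hA : 0 < 1 + γ / (δ * m)) :
    expWeightIntegral γ δ (1 / (2 * γ) * log (1 + γ / (δ * m))) = 1 / m := by
  have hexp : 2 * γ * (1 / (2 * γ) * log (1 + γ / (δ * m))) = log (1 + γ / (δ * m)) := by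
    field_simp
  rw [expWeightIntegral, hexp, exp_log hA]
  rcases eq_or_ne m 0 with rfl | hm
  · simp
  · field_simp
    ring

end ExpWeightIntegral

lemma antitoneOn_inv_add_of_mul_sq_le_deriv {M M' W w : ℝ → ℝ} {a b : ℝ}
    (hM : ∀ t ∈ Ico a b, HasDerivAt M (M' t) t) (hW : ∀ t ∈ Ico a b, HasDerivAt W (w t) t)
    (hpos : ∀ t ∈ Ico a b, 0 < M t) (hineq : ∀ t ∈ Ico a b, w t * M t ^ 2 ≤ M' t) :
    AntitoneOn (fun t => (M t)⁻¹ + W t) (Ico a b) := by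
  have hderiv : ∀ t ∈ Ico a b,
      HasDerivAt (fun t => (M t)⁻¹ + W t) (-M' t / M t ^ 2 + w t) t := fun t ht =>
    ((hM t ht).inv (hpos t ht).ne').add (hW t ht)
  refine antitoneOn_of_hasDerivWithinAt_nonpos (convex_Ico a b)
    (fun t ht => (hderiv t ht).continuousAt.continuousWithinAt)
    (fun t ht => (hderiv t (interior_subset ht)).hasDerivWithinAt) fun t ht => ?_
  have ht' := interior_subset ht
  have hM2 : 0 < M t ^ 2 := pow_pos (hpos t ht') 2
  rw [neg_div, neg_add_nonpos_iff, le_div_iff₀ hM2]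
  exact hineq t ht'

theorem stmt1_general (γ δ T : ℝ) (hδ : 0 < δ) (hγ : γ ≠ 0) (hT : 0 < T)
    (M M' : ℝ → ℝ)
    (hM : ∀ t ∈ Set.Ico (0:ℝ) T, HasDerivAt M (M' t) t)
    (hpos : ∀ t ∈ Set.Ico (0:ℝ) T, 0 < M t)
    (hγM : γ > -δ * M 0)
    (hineq : ∀ t ∈ Set.Ico (0:ℝ) T, 2 * δ * Real.exp (2*γ*t) * (M t)^2 ≤ M' t) :
    T ≤ (1/(2*γ)) * Real.log (1 + γ / (δ * M 0)) := by
  set τ := 1 / (2 * γ) * log (1 + γ / (δ * M 0))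
  have h0 : (0 : ℝ) ∈ Ico 0 T := ⟨le_rfl, hT⟩
  have hδM : 0 < δ * M 0 := mul_pos hδ (hpos 0 h0)
  have hA : 0 < 1 + γ / (δ * M 0) := by
    rw [one_add_div hδM.ne']
    exact div_pos (by linarith) hδM
  have hanti := antitoneOn_inv_add_of_mul_sq_le_deriv hM
    (fun t _ => hasDerivAt_expWeightIntegral (δ := δ) hγ t) hpos hineq
  have hbelow : ∀ t ∈ Ico 0 T, t < τ := fun t ht => by
    rw [← (expWeightIntegral_strictMono hγ hδ).lt_iff_lt,
      expWeightIntegral_log_one_add_div hγ hδ.ne' hA]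
    have hdecr := hanti h0 ht ht.1
    simp only [expWeightIntegral_zero, add_zero] at hdecr
    linarith [inv_pos.mpr (hpos t ht), one_div (M 0)]
  by_contra! hτ
  exact (hbelow (max 0 τ) ⟨le_max_left _ _, max_lt hT hτ⟩).not_ge (le_max_right _ _)

theorem stmt1 (γ δ T : ℝ) (hδ : 0 < δ) (hγ : γ ≠ 0) (hT : 0 < T)
    (M M' : ℝ → ℝ)
    (hM : ∀ t ∈ Set.Ico (0:ℝ) T, HasDerivAt M (M' t) t)
    (hpos : ∀ t ∈ Set.Ico (0:ℝ) T, 0 < M t)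
    (hM0 : 0 < M 0)
    (hγM : γ > -δ * M 0)
    (hineq : ∀ t ∈ Set.Ico (0:ℝ) T, 2 * δ * Real.exp (2*γ*t) * (M t)^2 ≤ M' t) :
    T ≤ (1/(2*γ)) * Real.log (1 + γ / (δ * M 0)) :=
  stmt1_general γ δ T hδ hγ hT M M' hM hpos hγM hineq
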